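/- arXiv:2303.01489 — 2 statements merged into one kernel-verified Lean document; each statement's English description precedes it below -/
import Mathlib

section
/- Let p ∈ (1,∞), T > 0, let φ : [0,T] → [0,∞) be continuous, and let G : [0,T] → (0,∞) be differentiable with G'(t) ≤ p φ(t) G(t)^{(p−1)/p} for all t ∈ [0,T]. Then G(t)^{1/p} ≤ G(0)^{1/p} + ∫₀ᵗ φ(s) ds for all t ∈ [0,T]. -/
open Set MeasureTheory

/-!
Differentiating `G ^ (1/p)` by the chain rule turns the hypothesis `G' ≤ p φ G ^ ((p-1)/p)` into
`(G ^ (1/p))' ≤ φ`, since `G ^ ((p-1)/p) * G ^ (1/p - 1) = 1`; integrating this bound from `0`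
to `t` gives the claim.
-/

theorem sub_le_integral_of_hasDerivWithinAt_Icc_of_le {a b t : ℝ} {g g' φ : ℝ → ℝ}
    (hderiv : ∀ x ∈ Icc a b, HasDerivWithinAt g (g' x) (Icc a b) x)
    (hφ : IntegrableOn φ (Icc a b)) (hle : ∀ x ∈ Ioo a b, g' x ≤ φ x) (ht : t ∈ Icc a b) :
    g t - g a ≤ ∫ y in a..t, φ y := by
  have hsub : Icc a t ⊆ Icc a b := Icc_subset_Icc_right ht.2
  refine intervalIntegral.sub_le_integral_of_hasDeriv_right_of_le ht.1
    (fun x hx => ((hderiv x (hsub hx)).continuousWithinAt).mono hsub)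
    (fun x hx => ?_) (hφ.mono_set hsub) (fun x hx => hle x ⟨hx.1, hx.2.trans_le ht.2⟩)
  have hx' : x ∈ Ioo a b := ⟨hx.1, hx.2.trans_le ht.2⟩
  exact ((hderiv x (Ioo_subset_Icc_self hx')).hasDerivAt
    (Icc_mem_nhds hx'.1 hx'.2)).hasDerivWithinAt

theorem mul_one_div_mul_rpow_le_of_le_mul_rpow {p y d c : ℝ} (hp : 0 < p) (hy : 0 < y)
    (h : d ≤ p * c * y ^ ((p - 1) / p)) : d * (1 / p) * y ^ (1 / p - 1) ≤ c := by
  have hcancel : y ^ ((p - 1) / p) * y ^ (1 / p - 1) = 1 := by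
    rw [← Real.rpow_add hy, show (p - 1) / p + (1 / p - 1) = 0 by field_simp; ring,
      Real.rpow_zero]
  calc d * (1 / p) * y ^ (1 / p - 1)
      ≤ p * c * y ^ ((p - 1) / p) * (1 / p) * y ^ (1 / p - 1) := by gcongr
    _ = c * (p * (1 / p)) * (y ^ ((p - 1) / p) * y ^ (1 / p - 1)) := by ring
    _ = c := by rw [hcancel, mul_one_div_cancel hp.ne', mul_one, mul_one]

theorem gronwall_power_inequality_general (p T : ℝ) (hp : 1 < p)
    (φ G G' : ℝ → ℝ)
    (hφcont : ContinuousOn φ (Set.Icc 0 T))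
    (hGpos : ∀ t ∈ Set.Icc (0:ℝ) T, 0 < G t)
    (hGdiff : ∀ t ∈ Set.Icc (0:ℝ) T, HasDerivWithinAt G (G' t) (Set.Icc 0 T) t)
    (hineq : ∀ t ∈ Set.Icc (0:ℝ) T, G' t ≤ p * φ t * G t ^ ((p - 1) / p)) :
    ∀ t ∈ Set.Icc (0:ℝ) T, G t ^ (1/p) ≤ G 0 ^ (1/p) + ∫ s in (0:ℝ)..t, φ s := by
  intro t ht
  have hroot : ∀ x ∈ Icc (0:ℝ) T, HasDerivWithinAt (fun s => G s ^ (1/p))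
      (G' x * (1/p) * G x ^ (1/p - 1)) (Icc 0 T) x :=
    fun x hx => (hGdiff x hx).rpow_const (Or.inl (hGpos x hx).ne')
  have hbound := sub_le_integral_of_hasDerivWithinAt_Icc_of_le hroot
    (hφcont.integrableOn_compact isCompact_Icc)
    (fun x hx => mul_one_div_mul_rpow_le_of_le_mul_rpow (by linarith) (hGpos x
      (Ioo_subset_Icc_self hx)) (hineq x (Ioo_subset_Icc_self hx))) ht
  linarith

theorem gronwall_power_inequality (p T : ℝ) (hp : 1 < p) (hT : 0 < T)
    (φ G G' : ℝ → ℝ)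
    (hφcont : ContinuousOn φ (Set.Icc 0 T))
    (hφnonneg : ∀ t ∈ Set.Icc (0:ℝ) T, 0 ≤ φ t)
    (hGpos : ∀ t ∈ Set.Icc (0:ℝ) T, 0 < G t)
    (hGdiff : ∀ t ∈ Set.Icc (0:ℝ) T, HasDerivWithinAt G (G' t) (Set.Icc 0 T) t)
    (hineq : ∀ t ∈ Set.Icc (0:ℝ) T, G' t ≤ p * φ t * G t ^ ((p - 1) / p)) :
    ∀ t ∈ Set.Icc (0:ℝ) T, G t ^ (1/p) ≤ G 0 ^ (1/p) + ∫ s in (0:ℝ)..t, φ s :=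
  gronwall_power_inequality_general p T hp φ G G' hφcont hGpos hGdiff hineq
end

section
/- Let Ω ⊂ ℝⁿ be an open, bounded, connected set with Lipschitz boundary, let d_{I*} > 0, β > 0, γ > 0, δ > 0, ν ≥ 0, and let S̃* : Ω̄ → ℝ be continuous, bounded, and positive. Define λ*(S̃*) := −inf{ ∫_Ω ( d_{I*}|∇φ|² + ((γ+ν+δ) − βS̃*)φ² ) dx : φ admissible with ∫_Ω φ² dx = 1 } and R₀* := sup{ ∫_Ω βS̃* φ² dx / ∫_Ω ( d_{I*}|∇φ|² + (γ+ν+δ)φ² ) dx : φ admissible }. Then R₀* − 1 and λ*(S̃*) have the same sign: λ*(S̃*) > 0 if and only if R₀* > 1, λ*(S̃*) = 0 if and only if R₀* = 1, and λ*(S̃*) < 0 if and only if R₀* < 1. -/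
/-!
Both quantities only see `L²`-normalized test functions `φ`: the eigenvalue is `-inf (D φ - W φ)`
with `D φ = ∫ d |∇φ|² + κ φ² ≥ κ` and `W φ = ∫ w φ² ≤ sup |w|`, and the quotient `W φ / D φ`
defining `R₀` is invariant under rescaling `φ`. Then `inf (D - W) ≥ 0` iff `W ≤ D` everywhere iff
`R₀ ≤ 1`. For the strict version, a gap `D - W ≥ m > 0` forces `W / D ≤ M / (M + m) < 1`, and
conversely `W ≤ R₀ D` with `R₀ < 1` gives `D - W ≥ (1 - R₀) κ > 0`.
-/

open MeasureTheory Set Filter Topology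

/-- The spatial Laplacian of `f : ℝⁿ → ℝ`, as the sum of second partial derivatives. -/
noncomputable def Lap {n : ℕ} (f : EuclideanSpace ℝ (Fin n) → ℝ)
    (x : EuclideanSpace ℝ (Fin n)) : ℝ :=
  ∑ i : Fin n, fderiv ℝ (fun y => fderiv ℝ f y (EuclideanSpace.single i 1)) x
    (EuclideanSpace.single i 1)

/-- The sup-norm `‖g‖_∞ = sup_{x ∈ Ω̄} |g x|` over the closure of `Ω`. -/
noncomputable def supN {n : ℕ} (Ω : Set (EuclideanSpace ℝ (Fin n)))
    (g : EuclideanSpace ℝ (Fin n) → ℝ) : ℝ :=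
  ⨆ x : closure Ω, |g x|

/-- Classical regularity on the time interval `J`: for each `t ∈ J`, `u (·,t) ∈ C²(Ω) ∩ C(Ω̄)`,
and for each `x ∈ Ω̄`, `u (x,·)` is continuously differentiable on `J`. -/
def ClassicalOn {n : ℕ} (Ω : Set (EuclideanSpace ℝ (Fin n)))
    (u : EuclideanSpace ℝ (Fin n) → ℝ → ℝ) (J : Set ℝ) : Prop :=
  (∀ t ∈ J, ContDiffOn ℝ 2 (fun x => u x t) Ω ∧ ContinuousOn (fun x => u x t) (closure Ω)) ∧
  ∀ x ∈ closure Ω, ContDiffOn ℝ 1 (fun s => u x s) J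

/-- Zero-flux (homogeneous Neumann) boundary condition: for each `t ∈ J`, the spatial
gradient of `u (·,t)` vanishes at every point of `∂Ω`. -/
def ZeroFlux {n : ℕ} (Ω : Set (EuclideanSpace ℝ (Fin n)))
    (u : EuclideanSpace ℝ (Fin n) → ℝ → ℝ) (J : Set ℝ) : Prop :=
  ∀ t ∈ J, ∀ x ∈ frontier Ω, gradient (fun y => u y t) x = 0

/-- The admissible test class: continuously differentiable `φ` with
`0 < ∫_Ω φ² < ∞` and `∫_Ω |∇φ|² < ∞`. -/
def AdmissibleTest {n : ℕ} (Ω : Set (EuclideanSpace ℝ (Fin n)))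
    (φ : EuclideanSpace ℝ (Fin n) → ℝ) : Prop :=
  ContDiffOn ℝ 1 φ Ω ∧ IntegrableOn (fun x => φ x ^ 2) Ω ∧
  0 < (∫ x in Ω, φ x ^ 2) ∧ IntegrableOn (fun x => ‖gradient φ x‖ ^ 2) Ω

/-- The principal eigenvalue `λ` of `dc Δ + (w - κ)` with Neumann boundary conditions,
via its variational characterization. -/
noncomputable def principalEig {n : ℕ} (Ω : Set (EuclideanSpace ℝ (Fin n)))
    (dc κ : ℝ) (w : EuclideanSpace ℝ (Fin n) → ℝ) : ℝ :=
  -sInf {r : ℝ | ∃ φ : EuclideanSpace ℝ (Fin n) → ℝ, AdmissibleTest Ω φ ∧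
    (∫ x in Ω, φ x ^ 2) = 1 ∧
    r = ∫ x in Ω, (dc * ‖gradient φ x‖ ^ 2 + (κ - w x) * φ x ^ 2)}

/-- The basic reproduction number associated to the weight `w`, damping `κ` and
diffusion `dc`, via its variational characterization. -/
noncomputable def reproNumber {n : ℕ} (Ω : Set (EuclideanSpace ℝ (Fin n)))
    (dc κ : ℝ) (w : EuclideanSpace ℝ (Fin n) → ℝ) : ℝ :=
  sSup {r : ℝ | ∃ φ : EuclideanSpace ℝ (Fin n) → ℝ, AdmissibleTest Ω φ ∧
    r = (∫ x in Ω, w x * φ x ^ 2) /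
      (∫ x in Ω, (dc * ‖gradient φ x‖ ^ 2 + κ * φ x ^ 2))}

theorem gradient_const_mul {F : Type*} [NormedAddCommGroup F] [InnerProductSpace ℝ F]
    [CompleteSpace F] {f : F → ℝ} {x : F} (c : ℝ) (hf : DifferentiableAt ℝ f x) :
    gradient (fun y => c * f y) x = c • gradient f x := by
  simp only [gradient, fderiv_const_mul hf, map_smul]

section VariationalSign

variable {ι : Type*} {D W : ι → ℝ} {κ : ℝ}

theorem bddBelow_range_sub (hD : ∀ i, κ ≤ D i) (hW : BddAbove (range W)) :
    BddBelow (range fun i => D i - W i) := by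
  obtain ⟨M, hM⟩ := hW
  exact ⟨κ - M, forall_mem_range.2 fun i => by linarith [hD i, hM (mem_range_self i)]⟩

theorem bddAbove_range_div (hκ : 0 < κ) (hD : ∀ i, κ ≤ D i) (hW : BddAbove (range W)) :
    BddAbove (range fun i => W i / D i) := by
  obtain ⟨M, hM⟩ := hW
  refine ⟨max M 0 / κ, forall_mem_range.2 fun i => ?_⟩
  calc W i / D i ≤ max M 0 / D i :=
        div_le_div_of_nonneg_right ((hM (mem_range_self i)).trans (le_max_left _ _))
          (hκ.trans_le (hD i)).le
    _ ≤ max M 0 / κ := div_le_div_of_nonneg_left (le_max_right _ _) hκ (hD i)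

theorem iInf_sub_nonneg_iff [Nonempty ι] (hκ : 0 < κ) (hD : ∀ i, κ ≤ D i) (hW : BddAbove (range W)) :
    0 ≤ ⨅ i, (D i - W i) ↔ ⨆ i, W i / D i ≤ 1 := by
  rw [le_ciInf_iff (bddBelow_range_sub hD hW), ciSup_le_iff (bddAbove_range_div hκ hD hW)]
  exact forall_congr' fun i => by rw [sub_nonneg, div_le_one (hκ.trans_le (hD i))]

theorem iInf_sub_pos_iff [Nonempty ι] (hκ : 0 < κ) (hD : ∀ i, κ ≤ D i) (hW : BddAbove (range W)) :
    0 < ⨅ i, (D i - W i) ↔ ⨆ i, W i / D i < 1 := by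
  constructor
  · intro hm
    set m := ⨅ i, (D i - W i)
    obtain ⟨M, hM⟩ := hW
    set M' := max M 0
    have hM' : 0 < M' + m := by positivity
    -- `W i / D i = W i / (W i + (D i - W i))` grows with `W i ≤ M'` and shrinks with `D i - W i ≥ m`
    have hbound : ∀ i, W i / D i ≤ M' / (M' + m) := fun i => by
      have hWi : W i ≤ M' := (hM (mem_range_self i)).trans (le_max_left _ _)
      have hgap : m ≤ D i - W i := ciInf_le (bddBelow_range_sub hD ⟨M, hM⟩) i
      rw [div_le_div_iff₀ (hκ.trans_le (hD i)) hM']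
      nlinarith [le_max_right M 0]
    calc ⨆ i, W i / D i ≤ M' / (M' + m) := ciSup_le hbound
      _ < 1 := (div_lt_one hM').2 (by linarith)
  · intro hs
    set s := ⨆ i, W i / D i
    have hgap : ∀ i, (1 - s) * κ ≤ D i - W i := fun i => by
      have hDi := hκ.trans_le (hD i)
      have hWi : W i ≤ s * D i :=
        (div_le_iff₀ hDi).1 (le_ciSup (bddAbove_range_div hκ hD hW) i)
      nlinarith [hD i]
    exact (mul_pos (sub_pos.2 hs) hκ).trans_le (le_ciInf hgap)

end VariationalSign

theorem sign_neg_eq_sign_sub_one {a b : ℝ} (h₀ : 0 ≤ a ↔ b ≤ 1) (h₁ : 0 < a ↔ b < 1) :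
    (0 < -a ↔ 1 < b) ∧ (-a = 0 ↔ b = 1) ∧ (-a < 0 ↔ b < 1) := by
  refine ⟨by rw [neg_pos, ← not_le, h₀, not_le], ?_, by rw [neg_lt_zero, h₁]⟩
  rw [neg_eq_zero]
  constructor
  · intro h
    exact le_antisymm (h₀.1 h.ge) (not_lt.1 fun hb => (h₁.2 hb).ne' h)
  · intro h
    exact le_antisymm (not_lt.1 fun ha => (h₁.1 ha).ne h) (h₀.2 h.le)

section TestFunctions

variable {n : ℕ} {Ω : Set (EuclideanSpace ℝ (Fin n))} {φ : EuclideanSpace ℝ (Fin n) → ℝ}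

abbrev NormalizedTest (Ω : Set (EuclideanSpace ℝ (Fin n))) : Type :=
  {φ : EuclideanSpace ℝ (Fin n) → ℝ // AdmissibleTest Ω φ ∧ ∫ x in Ω, φ x ^ 2 = 1}

noncomputable def dirichletEnergy (Ω : Set (EuclideanSpace ℝ (Fin n))) (dc κ : ℝ)
    (φ : EuclideanSpace ℝ (Fin n) → ℝ) : ℝ :=
  ∫ x in Ω, (dc * ‖gradient φ x‖ ^ 2 + κ * φ x ^ 2)

noncomputable def weightedMass (Ω : Set (EuclideanSpace ℝ (Fin n)))
    (w φ : EuclideanSpace ℝ (Fin n) → ℝ) : ℝ :=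
  ∫ x in Ω, w x * φ x ^ 2

theorem gradient_norm_sq_const_mul (hΩ : IsOpen Ω) (hφ : ContDiffOn ℝ 1 φ Ω) (a : ℝ) {x}
    (hx : x ∈ Ω) : ‖gradient (fun y => a * φ y) x‖ ^ 2 = a ^ 2 * ‖gradient φ x‖ ^ 2 := by
  have hφx := (hφ.differentiableOn one_ne_zero).differentiableAt (hΩ.mem_nhds hx)
  rw [gradient_const_mul a hφx, norm_smul, mul_pow, Real.norm_eq_abs, sq_abs]

theorem integral_const_mul_sq (a : ℝ) :
    ∫ x in Ω, (a * φ x) ^ 2 = a ^ 2 * ∫ x in Ω, φ x ^ 2 := by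
  simp only [mul_pow, integral_const_mul]

theorem dirichletEnergy_const_mul (hΩ : IsOpen Ω) (hφ : ContDiffOn ℝ 1 φ Ω) (dc κ a : ℝ) :
    dirichletEnergy Ω dc κ (fun x => a * φ x) = a ^ 2 * dirichletEnergy Ω dc κ φ := by
  rw [dirichletEnergy, dirichletEnergy, ← integral_const_mul]
  refine setIntegral_congr_fun hΩ.measurableSet fun x hx => ?_
  simp only [gradient_norm_sq_const_mul hΩ hφ a hx]
  ring

theorem weightedMass_const_mul (w : EuclideanSpace ℝ (Fin n) → ℝ) (a : ℝ) :
    weightedMass Ω w (fun x => a * φ x) = a ^ 2 * weightedMass Ω w φ := by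
  rw [weightedMass, weightedMass, ← integral_const_mul]
  congr 1 with x
  ring

theorem AdmissibleTest.const_mul (hΩ : IsOpen Ω) (hφ : AdmissibleTest Ω φ) {a : ℝ}
    (ha : a ≠ 0) : AdmissibleTest Ω (fun x => a * φ x) := by
  obtain ⟨hC1, hL2, hpos, hgrad⟩ := hφ
  refine ⟨contDiffOn_const.mul hC1, ?_, ?_, ?_⟩
  · simp only [mul_pow]
    exact hL2.const_mul (a ^ 2)
  · rw [integral_const_mul_sq]
    positivity
  · exact IntegrableOn.congr_fun (hgrad.const_mul (a ^ 2))
      (fun x hx => (gradient_norm_sq_const_mul hΩ hC1 a hx).symm) hΩ.measurableSet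

theorem AdmissibleTest.exists_normalized (hφ : AdmissibleTest Ω φ) :
    ∃ a : ℝ, a ≠ 0 ∧ ∫ x in Ω, (a * φ x) ^ 2 = 1 := by
  refine ⟨√(∫ x in Ω, φ x ^ 2)⁻¹, (Real.sqrt_pos.2 (inv_pos.2 hφ.2.2.1)).ne', ?_⟩
  rw [integral_const_mul_sq, Real.sq_sqrt (inv_nonneg.2 hφ.2.2.1.le),
    inv_mul_cancel₀ hφ.2.2.1.ne']

theorem nonempty_normalizedTest (hΩ : IsOpen Ω) (hΩb : Bornology.IsBounded Ω)
    (hne : Ω.Nonempty) : Nonempty (NormalizedTest Ω) := by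
  have hvol : 0 < volume.real Ω :=
    ENNReal.toReal_pos (hΩ.measure_pos volume hne).ne' hΩb.measure_lt_top.ne
  have h1 : AdmissibleTest Ω (fun _ => 1) := by
    refine ⟨contDiffOn_const, integrableOn_const hΩb.measure_lt_top.ne, ?_, ?_⟩
    · simpa using hvol
    · simp [gradient_fun_const]
  obtain ⟨a, ha, hnorm⟩ := h1.exists_normalized
  exact ⟨⟨_, h1.const_mul hΩ ha, hnorm⟩⟩

end TestFunctions

section WeightedEnergy

variable {n : ℕ} {Ω : Set (EuclideanSpace ℝ (Fin n))} {w φ : EuclideanSpace ℝ (Fin n) → ℝ}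
  {dc κ C : ℝ}

theorem integrableOn_mul_sq_of_abs_le (hΩ : MeasurableSet Ω)
    (hw : AEStronglyMeasurable w (volume.restrict Ω)) (hC : ∀ x ∈ Ω, |w x| ≤ C)
    (hφ : IntegrableOn (fun x => φ x ^ 2) Ω) : IntegrableOn (fun x => w x * φ x ^ 2) Ω :=
  hφ.bdd_mul hw ((ae_restrict_mem hΩ).mono fun x hx => hC x hx)

theorem integral_energy_eq_sub (hφ : AdmissibleTest Ω φ)
    (hwφ : IntegrableOn (fun x => w x * φ x ^ 2) Ω) :
    ∫ x in Ω, (dc * ‖gradient φ x‖ ^ 2 + (κ - w x) * φ x ^ 2) =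
      dirichletEnergy Ω dc κ φ - weightedMass Ω w φ := by
  have hD : IntegrableOn (fun x => dc * ‖gradient φ x‖ ^ 2 + κ * φ x ^ 2) Ω :=
    (hφ.2.2.2.const_mul dc).add (hφ.2.1.const_mul κ)
  rw [dirichletEnergy, weightedMass, ← integral_sub hD hwφ]
  congr 1 with x
  ring

theorem mul_integral_sq_le_dirichletEnergy (hdc : 0 ≤ dc) (hφ : AdmissibleTest Ω φ) :
    κ * ∫ x in Ω, φ x ^ 2 ≤ dirichletEnergy Ω dc κ φ := by
  rw [← integral_const_mul]
  exact integral_mono (hφ.2.1.const_mul κ) ((hφ.2.2.2.const_mul dc).add (hφ.2.1.const_mul κ))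
    fun x => le_add_of_nonneg_left (by positivity)

theorem weightedMass_le (hΩ : MeasurableSet Ω) (hC : ∀ x ∈ Ω, w x ≤ C)
    (hφ : IntegrableOn (fun x => φ x ^ 2) Ω) (hwφ : IntegrableOn (fun x => w x * φ x ^ 2) Ω) :
    weightedMass Ω w φ ≤ C * ∫ x in Ω, φ x ^ 2 := by
  rw [weightedMass, ← integral_const_mul]
  exact setIntegral_mono_on hwφ (hφ.const_mul C) hΩ
    fun x hx => mul_le_mul_of_nonneg_right (hC x hx) (sq_nonneg _)

theorem principalEig_eq_neg_iInf (hΩ : MeasurableSet Ω)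
    (hw : AEStronglyMeasurable w (volume.restrict Ω)) (hC : ∀ x ∈ Ω, |w x| ≤ C) :
    principalEig Ω dc κ w =
      -⨅ φ : NormalizedTest Ω, (dirichletEnergy Ω dc κ φ - weightedMass Ω w φ) := by
  have henergy (φ : NormalizedTest Ω) :=
    integral_energy_eq_sub (dc := dc) (κ := κ) φ.2.1
      (integrableOn_mul_sq_of_abs_le hΩ hw hC φ.2.1.2.1)
  rw [principalEig, ← sInf_range]
  congr 2
  ext r
  constructor
  · rintro ⟨φ, hφ, hnorm, rfl⟩
    exact ⟨⟨φ, hφ, hnorm⟩, (henergy ⟨φ, hφ, hnorm⟩).symm⟩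
  · rintro ⟨φ, rfl⟩
    exact ⟨φ, φ.2.1, φ.2.2, (henergy φ).symm⟩

theorem reproNumber_eq_iSup (hΩ : IsOpen Ω) :
    reproNumber Ω dc κ w =
      ⨆ φ : NormalizedTest Ω, weightedMass Ω w φ / dirichletEnergy Ω dc κ φ := by
  rw [reproNumber, ← sSup_range]
  congr 1
  ext r
  constructor
  · rintro ⟨φ, hφ, rfl⟩
    obtain ⟨a, ha, hnorm⟩ := hφ.exists_normalized
    refine ⟨⟨_, hφ.const_mul hΩ ha, hnorm⟩, ?_⟩
    change weightedMass Ω w (fun x => a * φ x) / dirichletEnergy Ω dc κ (fun x => a * φ x) = _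
    rw [weightedMass_const_mul, dirichletEnergy_const_mul hΩ hφ.1,
      mul_div_mul_left _ _ (pow_ne_zero 2 ha)]
    rfl
  · rintro ⟨φ, rfl⟩
    exact ⟨φ, φ.2.1, rfl⟩

theorem principalEig_sign_eq_reproNumber_sign (hΩ : IsOpen Ω) (hΩb : Bornology.IsBounded Ω)
    (hne : Ω.Nonempty) (hdc : 0 ≤ dc) (hκ : 0 < κ)
    (hw : AEStronglyMeasurable w (volume.restrict Ω)) (hC : ∀ x ∈ Ω, |w x| ≤ C) :
    (0 < principalEig Ω dc κ w ↔ 1 < reproNumber Ω dc κ w) ∧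
    (principalEig Ω dc κ w = 0 ↔ reproNumber Ω dc κ w = 1) ∧
    (principalEig Ω dc κ w < 0 ↔ reproNumber Ω dc κ w < 1) := by
  have := nonempty_normalizedTest hΩ hΩb hne
  have hD (φ : NormalizedTest Ω) : κ ≤ dirichletEnergy Ω dc κ φ := by
    simpa only [φ.2.2, mul_one] using mul_integral_sq_le_dirichletEnergy hdc φ.2.1
  have hW : BddAbove (range fun φ : NormalizedTest Ω => weightedMass Ω w φ) := by
    refine ⟨C, forall_mem_range.2 fun φ => ?_⟩
    simpa only [φ.2.2, mul_one] using weightedMass_le hΩ.measurableSet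
      (fun x hx => (le_abs_self (w x)).trans (hC x hx)) φ.2.1.2.1
      (integrableOn_mul_sq_of_abs_le hΩ.measurableSet hw hC φ.2.1.2.1)
  rw [principalEig_eq_neg_iInf hΩ.measurableSet hw hC, reproNumber_eq_iSup hΩ]
  exact sign_neg_eq_sign_sub_one (iInf_sub_nonneg_iff hκ hD hW) (iInf_sub_pos_iff hκ hD hW)

end WeightedEnergy

theorem R0star_sign_eq_eigenvalue_sign_general {n : ℕ} (Ω : Set (EuclideanSpace ℝ (Fin n)))
    (hΩopen : IsOpen Ω) (hΩbdd : Bornology.IsBounded Ω) (hΩconn : IsConnected Ω)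
    (dIs' β γ δ ν : ℝ) (hdIs : 0 < dIs') (hγ : 0 < γ) (hδ : 0 < δ) (hν : 0 ≤ ν)
    (St : EuclideanSpace ℝ (Fin n) → ℝ) (hStcont : ContinuousOn St (closure Ω))
    (hStbdd : ∃ C : ℝ, ∀ x ∈ closure Ω, |St x| ≤ C) :
    (0 < principalEig Ω dIs' (γ + ν + δ) (fun x => β * St x) ↔
      1 < reproNumber Ω dIs' (γ + ν + δ) (fun x => β * St x)) ∧
    (principalEig Ω dIs' (γ + ν + δ) (fun x => β * St x) = 0 ↔
      reproNumber Ω dIs' (γ + ν + δ) (fun x => β * St x) = 1) ∧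
    (principalEig Ω dIs' (γ + ν + δ) (fun x => β * St x) < 0 ↔
      reproNumber Ω dIs' (γ + ν + δ) (fun x => β * St x) < 1) := by
  obtain ⟨C, hC⟩ := hStbdd
  have hw : AEStronglyMeasurable (fun x => β * St x) (volume.restrict Ω) :=
    ((hStcont.mono subset_closure).aestronglyMeasurable hΩopen.measurableSet).const_mul β
  have hwC : ∀ x ∈ Ω, |β * St x| ≤ |β| * C := fun x hx => by
    rw [abs_mul]
    exact mul_le_mul_of_nonneg_left (hC x (subset_closure hx)) (abs_nonneg β)
  exact principalEig_sign_eq_reproNumber_sign hΩopen hΩbdd hΩconn.nonempty hdIs.le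
    (by positivity) hw hwC

theorem R0star_sign_eq_eigenvalue_sign {n : ℕ} (hn : 1 ≤ n) (Ω : Set (EuclideanSpace ℝ (Fin n)))
    (hΩopen : IsOpen Ω) (hΩbdd : Bornology.IsBounded Ω) (hΩconn : IsConnected Ω)
    (dIs' β γ δ ν : ℝ) (hdIs : 0 < dIs') (hβ : 0 < β) (hγ : 0 < γ) (hδ : 0 < δ) (hν : 0 ≤ ν)
    (St : EuclideanSpace ℝ (Fin n) → ℝ) (hStcont : ContinuousOn St (closure Ω))
    (hStbdd : ∃ C : ℝ, ∀ x ∈ closure Ω, |St x| ≤ C)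
    (hStpos : ∀ x ∈ closure Ω, 0 < St x) :
    (0 < principalEig Ω dIs' (γ + ν + δ) (fun x => β * St x) ↔
      1 < reproNumber Ω dIs' (γ + ν + δ) (fun x => β * St x)) ∧
    (principalEig Ω dIs' (γ + ν + δ) (fun x => β * St x) = 0 ↔
      reproNumber Ω dIs' (γ + ν + δ) (fun x => β * St x) = 1) ∧
    (principalEig Ω dIs' (γ + ν + δ) (fun x => β * St x) < 0 ↔
      reproNumber Ω dIs' (γ + ν + δ) (fun x => β * St x) < 1) :=
  R0star_sign_eq_eigenvalue_sign_general Ω hΩopen hΩbdd hΩconn dIs' β γ δ ν hdIs hγ hδ hν St hStcont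
    hStbdd
end
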